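/- arXiv:0810.2048 — 2 statements merged into one kernel-verified Lean document; each statement's English description precedes it below -/
import Mathlib

section
/- Let $a_0,\dots,a_{k-1}$ be real numbers, $h < A$ reals with $a_i \ge h$ for all $i$ and $\sum_{i=0}^{k-1} a_i \le kA$. Then for every $\epsilon > 0$ there exist integers $0 \le k_1 < \dots < k_l \le k-1$ with $l \ge k\,\epsilon/(A+\epsilon-h)$ such that $\sum_{j=k_i}^{n} a_j \le (n-k_i+1)(A+\epsilon)$ for every $1 \le i \le l$ and every $n$ with $k_i \le n \le k-1$. -/
/-!
Put `S n = ∑_{j<n} (a j - (A + ε))`. Call `i < k` a Pliss time if `S m ≤ S i` for all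
`i < m ≤ k`; at a Pliss time every block sum `∑_{j=i}^{n} a j` is at most `(n - i + 1)(A + ε)`.
Since `S` drops by at most `A + ε - h` per step, and a drop of `S` from `S i` to `S k` can only
be paid for by Pliss times in `[i, k)`, the total drop `S 0 - S k ≥ k ε` forces at least
`k ε / (A + ε - h)` Pliss times.
-/

open Finset

def IsPlissTime (S : ℕ → ℝ) (k i : ℕ) : Prop := ∀ m, i < m → m ≤ k → S m ≤ S i

open Classical in
theorem sub_le_card_isPlissTime_mul (S : ℕ → ℝ) {k : ℕ} {D : ℝ} (hD₀ : 0 ≤ D)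
    (hD : ∀ i < k, S i - S (i + 1) ≤ D) {i : ℕ} (hik : i ≤ k) :
    S i - S k ≤ #{j ∈ Ico i k | IsPlissTime S k j} * D := by
  rcases hik.eq_or_lt with rfl | hik
  · simp
  by_cases hi : IsPlissTime S k i
  · have hcard : #{j ∈ Ico i k | IsPlissTime S k j}
        = #{j ∈ Ico (i + 1) k | IsPlissTime S k j} + 1 := by
      have hIco : insert i (Ico (i + 1) k) = Ico i k := insert_Ico_succ_left_eq_Ico hik
      rw [← hIco, filter_insert, if_pos hi, card_insert_of_notMem (by simp)]
    have := sub_le_card_isPlissTime_mul S hD₀ hD (Nat.succ_le_of_lt hik)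
    rw [hcard]
    push_cast
    linarith [hD i hik]
  · obtain ⟨m, him, hmk, hSm⟩ : ∃ m, i < m ∧ m ≤ k ∧ S i < S m := by
      simpa [IsPlissTime] using hi
    have := sub_le_card_isPlissTime_mul S hD₀ hD hmk
    have hcard : #{j ∈ Ico m k | IsPlissTime S k j} ≤ #{j ∈ Ico i k | IsPlissTime S k j} :=
      card_le_card (filter_subset_filter _ (Ico_subset_Ico_left him.le))
    linarith [mul_le_mul_of_nonneg_right (Nat.cast_le (α := ℝ).2 hcard) hD₀]
termination_by k - i

theorem sum_Icc_le_of_isPlissTime {a : ℕ → ℝ} {c : ℝ} {k i n : ℕ}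
    (hi : IsPlissTime (fun n ↦ ∑ j ∈ range n, (a j - c)) k i) (hin : i ≤ n) (hnk : n < k) :
    ∑ j ∈ Icc i n, a j ≤ ((n : ℝ) - i + 1) * c := by
  have hdrop := hi (n + 1) (by omega) hnk
  rw [← sub_nonpos, ← sum_Ico_eq_sub _ (by omega), Ico_add_one_right_eq_Icc, sum_sub_distrib,
    sum_const, Nat.card_Icc, nsmul_eq_mul, Nat.cast_sub (by omega)] at hdrop
  push_cast at hdrop
  linarith

theorem stmt_0_general (k : ℕ) (a : ℕ → ℝ) (h A : ℝ) (hhA : h < A)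
    (hbelow : ∀ i < k, h ≤ a i)
    (hsum : ∑ i ∈ Finset.range k, a i ≤ (k : ℝ) * A)
    (ε : ℝ) (hε : 0 < ε) :
    ∃ (l : ℕ) (ks : Fin l → ℕ),
      StrictMono ks ∧
      (∀ i, ks i ≤ k - 1) ∧
      ((k : ℝ) * ε / (A + ε - h) ≤ (l : ℝ)) ∧
      (∀ (i : Fin l) (n : ℕ), ks i ≤ n → n ≤ k - 1 →
        ∑ j ∈ Finset.Icc (ks i) n, a j ≤ ((n : ℝ) - (ks i : ℝ) + 1) * (A + ε)) := by
  classical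
  set S : ℕ → ℝ := fun n ↦ ∑ j ∈ range n, (a j - (A + ε))
  set P := {i ∈ range k | IsPlissTime S k i}
  have hdrop : S 0 - S k ≤ #P * (A + ε - h) := by
    have := sub_le_card_isPlissTime_mul S (D := A + ε - h) (by linarith) (fun i hi ↦ by
      simp only [S, sum_range_succ]
      linarith [hbelow i hi]) k.zero_le
    rwa [← range_eq_Ico] at this
  have hS : S 0 - S k = ∑ i ∈ range k, (A + ε) - ∑ i ∈ range k, a i := by
    simp [S, sum_sub_distrib]
  rw [hS, sum_const, card_range, nsmul_eq_mul] at hdrop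
  have hmem (i : Fin #P) : P.orderEmbOfFin rfl i < k ∧ IsPlissTime S k (P.orderEmbOfFin rfl i) :=
    by simpa only [P, mem_filter, mem_range] using P.orderEmbOfFin_mem rfl i
  refine ⟨#P, P.orderEmbOfFin rfl, (P.orderEmbOfFin rfl).strictMono,
    fun i ↦ by have := (hmem i).1; omega, (div_le_iff₀ (by linarith)).2 (by linarith),
    fun i n hin hnk ↦ sum_Icc_le_of_isPlissTime (hmem i).2 hin (by have := (hmem i).1; omega)⟩

/-- Pliss' Lemma. -/
theorem stmt_0 (k : ℕ) (hk : 0 < k) (a : ℕ → ℝ) (h A : ℝ) (hhA : h < A)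
    (hbelow : ∀ i < k, h ≤ a i)
    (hsum : ∑ i ∈ Finset.range k, a i ≤ (k : ℝ) * A)
    (ε : ℝ) (hε : 0 < ε) :
    ∃ (l : ℕ) (ks : Fin l → ℕ),
      StrictMono ks ∧
      (∀ i, ks i ≤ k - 1) ∧
      ((k : ℝ) * ε / (A + ε - h) ≤ (l : ℝ)) ∧
      (∀ (i : Fin l) (n : ℕ), ks i ≤ n → n ≤ k - 1 →
        ∑ j ∈ Finset.Icc (ks i) n, a j ≤ ((n : ℝ) - (ks i : ℝ) + 1) * (A + ε)) :=
  stmt_0_general k a h A hhA hbelow hsum ε hε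
end

section
/- Let $M$ be a compact metric space, $f: M \to M$ continuous, and let $\zeta: M \to \mathbb{R}$ be continuous. Let $\mu$ be an $f$-ergodic invariant Borel probability with $\int \zeta\, d\mu < \lambda + \epsilon$ for reals $\lambda, \epsilon$ with $\epsilon > 0$, and let $h = \inf_M \zeta$. Define $H = \{x \in M : \sum_{j=0}^{n-1} \zeta(f^j(x)) \le n(\lambda + 3\epsilon) \ \forall n \ge 1\}$. Then $\mu(H) \ge \epsilon/(\lambda + 4\epsilon - h)$ provided $\lambda + 4\epsilon > h$. -/
/-!
Put `φ = ζ - (λ + 3ε)`; the set in question is where every Birkhoff sum of `φ` is `≤ 0`.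
By Garsia's maximal ergodic inequality, `∫ φ ≥ 0` over the set where some Birkhoff sum of
length `≤ N` is positive, while on its complement `φ ≥ h - λ - 3ε`. Hence
`∫ φ ≥ (h - λ - 3ε) μ(H)`, and letting `N → ∞` together with `∫ φ < -2ε` gives
`μ(H) ≥ 2ε / (λ + 3ε - h) ≥ ε / (λ + 4ε - h)`.
-/

open MeasureTheory Filter Finset Topology

section BirkhoffMax

variable {α : Type*} {f : α → α} {φ : α → ℝ} {N : ℕ} {x : α}

/-- The largest Birkhoff sum of length at most `N`. The empty sum is included, so it is
nonnegative, and positive exactly when some sum of length `1, …, N` is. -/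
noncomputable def birkhoffMax (f : α → α) (φ : α → ℝ) (N : ℕ) (x : α) : ℝ :=
  (range (N + 1)).sup' nonempty_range_add_one fun n => birkhoffSum f φ n x

lemma birkhoffSum_le_birkhoffMax {n : ℕ} (hn : n ≤ N) :
    birkhoffSum f φ n x ≤ birkhoffMax f φ N x :=
  le_sup' (fun n => birkhoffSum f φ n x) (mem_range.2 (Nat.lt_succ_of_le hn))

lemma birkhoffMax_nonneg : 0 ≤ birkhoffMax f φ N x := by
  simpa using birkhoffSum_le_birkhoffMax (f := f) (φ := φ) (x := x) (Nat.zero_le N)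

lemma birkhoffMax_nonpos_iff :
    birkhoffMax f φ N x ≤ 0 ↔ ∀ n ≤ N, birkhoffSum f φ n x ≤ 0 := by
  simp [birkhoffMax]

/-- The pointwise form of Garsia's maximal inequality: where the maximum is positive it is
attained by a sum of positive length, which is `φ x` plus a Birkhoff sum at `f x`. -/
lemma birkhoffMax_sub_birkhoffMax_apply_le_indicator :
    birkhoffMax f φ N x - birkhoffMax f φ N (f x) ≤
      {y | 0 < birkhoffMax f φ N y}.indicator φ x := by
  simp only [Set.indicator_apply, Set.mem_ofPred_eq]
  split_ifs with hpos
  · obtain ⟨m, hm, hmax⟩ :=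
      exists_mem_eq_sup' nonempty_range_add_one fun n => birkhoffSum f φ n x
    change birkhoffMax f φ N x = _ at hmax
    rcases m with _ | k
    · simp [hmax] at hpos
    · have hk : k ≤ N := by rw [mem_range] at hm; omega
      rw [hmax, birkhoffSum_succ']
      linarith [birkhoffSum_le_birkhoffMax (f := f) (φ := φ) (x := f x) hk]
  · linarith [birkhoffMax_nonneg (f := f) (φ := φ) (N := N) (x := f x)]

end BirkhoffMax

namespace MeasureTheory

variable {α : Type*} [MeasurableSpace α] {μ : Measure α} {f : α → α} {φ : α → ℝ}

lemma measurable_birkhoffSum (hf : Measurable f) (hφ : Measurable φ) (n : ℕ) :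
    Measurable (birkhoffSum f φ n) :=
  Finset.measurable_sum _ fun i _ => hφ.comp (hf.iterate i)

lemma MeasurePreserving.integrable_birkhoffSum (hf : MeasurePreserving f μ μ)
    (hφ : Integrable φ μ) (n : ℕ) : Integrable (birkhoffSum f φ n) μ :=
  integrable_finsetSum _ fun i _ => (hf.iterate i).integrable_comp_of_integrable hφ

lemma measurable_birkhoffMax (hf : Measurable f) (hφ : Measurable φ) (N : ℕ) :
    Measurable (birkhoffMax f φ N) :=
  Finset.measurable_range_sup'' fun n _ => measurable_birkhoffSum hf hφ n

lemma MeasurePreserving.integrable_birkhoffMax (hf : MeasurePreserving f μ μ)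
    (hφ : Integrable φ μ) (N : ℕ) : Integrable (birkhoffMax f φ N) μ := by
  have : birkhoffMax f φ N = (range (N + 1)).sup' nonempty_range_add_one (birkhoffSum f φ) := by
    ext x; simp [birkhoffMax]
  rw [this]
  exact sup'_induction (p := fun g => Integrable g μ) _ _ (fun _ h₁ _ h₂ => h₁.sup h₂)
    fun n _ => hf.integrable_birkhoffSum hφ n

/-- Garsia's maximal ergodic inequality. -/
theorem MeasurePreserving.setIntegral_birkhoffMax_pos_nonneg (hf : MeasurePreserving f μ μ)
    (hφm : Measurable φ) (hφ : Integrable φ μ) (N : ℕ) :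
    0 ≤ ∫ x in {x | 0 < birkhoffMax f φ N x}, φ x ∂μ := by
  have hGm := measurable_birkhoffMax hf.measurable hφm N
  have hG := hf.integrable_birkhoffMax hφ N
  have hGf : Integrable (fun x => birkhoffMax f φ N (f x)) μ := hf.integrable_comp_of_integrable hG
  have hE : MeasurableSet {x | 0 < birkhoffMax f φ N x} := measurableSet_lt measurable_const hGm
  have hinv : ∫ x, birkhoffMax f φ N (f x) ∂μ = ∫ x, birkhoffMax f φ N x ∂μ := by
    rw [← integral_map hf.measurable.aemeasurable hGm.aestronglyMeasurable, hf.map_eq]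
  calc (0 : ℝ) = ∫ x, (birkhoffMax f φ N x - birkhoffMax f φ N (f x)) ∂μ := by
        rw [integral_sub hG hGf, hinv, sub_self]
    _ ≤ ∫ x, {x | 0 < birkhoffMax f φ N x}.indicator φ x ∂μ :=
        integral_mono (hG.sub hGf) (hφ.indicator hE)
          fun _ => birkhoffMax_sub_birkhoffMax_apply_le_indicator
    _ = ∫ x in {x | 0 < birkhoffMax f φ N x}, φ x ∂μ := integral_indicator hE

variable [IsFiniteMeasure μ] {c : ℝ}

theorem MeasurePreserving.mul_measureReal_birkhoffMax_nonpos_le_integral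
    (hf : MeasurePreserving f μ μ) (hφm : Measurable φ) (hφ : Integrable φ μ)
    (hc : ∀ x, c ≤ φ x) (N : ℕ) :
    c * μ.real {x | birkhoffMax f φ N x ≤ 0} ≤ ∫ x, φ x ∂μ := by
  have hE : MeasurableSet {x | 0 < birkhoffMax f φ N x} :=
    measurableSet_lt measurable_const (measurable_birkhoffMax hf.measurable hφm N)
  have hcompl : {x | birkhoffMax f φ N x ≤ 0} = {x | 0 < birkhoffMax f φ N x}ᶜ := by
    ext x; simp
  rw [hcompl, ← integral_add_compl hE hφ]
  linarith [hf.setIntegral_birkhoffMax_pos_nonneg hφm hφ N,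
    setIntegral_ge_of_const_le_real hE.compl (measure_ne_top μ _) (fun x _ => hc x)
      hφ.integrableOn]

/-- Continuity of `μ` from above along the decreasing sets `{birkhoffMax f φ N ≤ 0}`. -/
theorem MeasurePreserving.mul_measureReal_birkhoffSum_nonpos_le_integral
    (hf : MeasurePreserving f μ μ) (hφm : Measurable φ) (hφ : Integrable φ μ)
    (hc : ∀ x, c ≤ φ x) :
    c * μ.real {x | ∀ n, birkhoffSum f φ n x ≤ 0} ≤ ∫ x, φ x ∂μ := by
  set s : ℕ → Set α := fun N => {x | birkhoffMax f φ N x ≤ 0}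
  have hinter : {x | ∀ n, birkhoffSum f φ n x ≤ 0} = ⋂ N, s N := by
    ext x
    simp only [s, Set.mem_iInter, Set.mem_ofPred_eq, birkhoffMax_nonpos_iff]
    exact ⟨fun h N n _ => h n, fun h n => h n n le_rfl⟩
  have hanti : Antitone s := fun M N hMN x hx =>
    birkhoffMax_nonpos_iff.2 fun n hn => birkhoffMax_nonpos_iff.1 hx n (hn.trans hMN)
  have hmeas : ∀ N, NullMeasurableSet (s N) μ := fun N =>
    (measurableSet_le (measurable_birkhoffMax hf.measurable hφm N)
      measurable_const).nullMeasurableSet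
  have hlim : Tendsto (fun N => c * μ.real (s N)) atTop (𝓝 (c * μ.real (⋂ N, s N))) :=
    ((ENNReal.tendsto_toReal (measure_ne_top μ _)).comp
      (tendsto_measure_iInter_atTop hmeas hanti ⟨0, measure_ne_top μ _⟩)).const_mul c
  rw [hinter]
  exact le_of_tendsto' hlim fun N => hf.mul_measureReal_birkhoffMax_nonpos_le_integral hφm hφ hc N

end MeasureTheory

theorem stmt_8_general {M : Type*} [MetricSpace M] [CompactSpace M] [MeasurableSpace M] [BorelSpace M]
    (f : M → M) (μ : Measure M) [IsProbabilityMeasure μ]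
    (hErg : Ergodic f μ) (ζ : M → ℝ) (hζ : Continuous ζ)
    (lam eps h : ℝ) (heps : 0 < eps)
    (hh : h = sInf (Set.range ζ))
    (hint : ∫ x, ζ x ∂μ < lam + eps) :
    eps / (lam + 4 * eps - h) ≤
      (μ {x | ∀ n : ℕ, 1 ≤ n →
        ∑ j ∈ Finset.range n, ζ (f^[j] x) ≤ (n : ℝ) * (lam + 3 * eps)}).toReal := by
  set A := lam + 3 * eps
  set H := {x | ∀ n : ℕ, 1 ≤ n → ∑ j ∈ Finset.range n, ζ (f^[j] x) ≤ (n : ℝ) * A}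
  have hζint : Integrable ζ μ := hζ.integrable_of_hasCompactSupport (.of_compactSpace ζ)
  have hhζ : ∀ x, h ≤ ζ x := fun x => hh ▸ csInf_le (isCompact_range hζ).bddBelow ⟨x, rfl⟩
  have hhint : h ≤ ∫ x, ζ x ∂μ := by
    simpa using integral_mono (integrable_const h) hζint hhζ
  have hH : H = {x | ∀ n, birkhoffSum f (fun y => ζ y - A) n x ≤ 0} := by
    ext x
    refine forall_congr' fun n => ?_
    rcases n with _ | n
    · simp
    · simp [birkhoffSum, Finset.sum_sub_distrib]
  have hbound : (h - A) * μ.real H ≤ ∫ x, ζ x ∂μ - A := by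
    have := hErg.toMeasurePreserving.mul_measureReal_birkhoffSum_nonpos_le_integral
      (hζ.measurable.sub_const A) (hζint.sub (integrable_const A)) (c := h - A)
      fun x => sub_le_sub_right (hhζ x) A
    rwa [← hH, integral_sub hζint (integrable_const A), integral_const, probReal_univ,
      one_smul] at this
  change eps / _ ≤ μ.real H
  rw [div_le_iff₀ (by linarith)]
  nlinarith [measureReal_nonneg (μ := μ) (s := H)]

/-- Pliss' Lemma combined with Birkhoff's ergodic theorem: the set of points with
uniformly good Birkhoff sums at all times has measure at least `ε/(λ + 4ε - h)`. -/
theorem stmt_8 {M : Type*} [MetricSpace M] [CompactSpace M] [MeasurableSpace M] [BorelSpace M]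
    (f : M → M) (hf : Continuous f) (μ : Measure M) [IsProbabilityMeasure μ]
    (hErg : Ergodic f μ) (ζ : M → ℝ) (hζ : Continuous ζ)
    (lam eps h : ℝ) (heps : 0 < eps)
    (hh : h = sInf (Set.range ζ))
    (hint : ∫ x, ζ x ∂μ < lam + eps)
    (hgt : h < lam + 4 * eps) :
    eps / (lam + 4 * eps - h) ≤
      (μ {x | ∀ n : ℕ, 1 ≤ n →
        ∑ j ∈ Finset.range n, ζ (f^[j] x) ≤ (n : ℝ) * (lam + 3 * eps)}).toReal :=
  stmt_8_general f μ hErg ζ hζ lam eps h heps hh hint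
end
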